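/- Let μ be a probability measure on a measurable space α, let κ and η be Markov kernels from α to a measurable space β such that the map x ↦ TV(κ(x), η(x)) is measurable, and let ρ be a Markov kernel from α × β to a measurable space γ. Then TV((μ ⊗ κ) ⊗ ρ, (μ ⊗ η) ⊗ ρ) ≤ ∫ TV(κ(x), η(x)) dμ(x). In particular, replacing one conditional in a sequential factorization changes the joint distribution by at most the expected total variation distance of that conditional, regardless of the subsequent common kernel. -/

import Mathlib

/-!
For a measurable `A`, the section measure `f p = ρ p {z | (p, z) ∈ A}` takes values in `[0, 1]`
and `((μ ⊗ ξ) ⊗ ρ)(A) = ∫ x, ∫ y, f (x, y) ∂ξ x ∂μ`. For each `x`, integrals of a `[0, 1]`-valued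
function against `κ x` and `η x` differ by at most `TV(κ x, η x)`; integrating over `μ` gives
the bound.
-/

open MeasureTheory ProbabilityTheory Set

/-- Total variation distance between two measures:
`TV(P,Q) = sup { |P(A) - Q(A)| : A measurable }`. -/
noncomputable def tvDist {α : Type*} [MeasurableSpace α] (P Q : Measure α) : ℝ :=
  ⨆ A : {s : Set α // MeasurableSet s}, |(P A.1).toReal - (Q A.1).toReal|

section tvDist

variable {β : Type*} [MeasurableSpace β] (P Q : Measure β)

lemma abs_measureReal_sub_le_tvDist [IsFiniteMeasure P] [IsFiniteMeasure Q]
    {A : Set β} (hA : MeasurableSet A) : |P.real A - Q.real A| ≤ tvDist P Q := by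
  refine le_ciSup (f := fun s : {s : Set β // MeasurableSet s} => |P.real s - Q.real s|)
    ⟨P.real univ + Q.real univ, ?_⟩ ⟨A, hA⟩
  rintro _ ⟨s, rfl⟩
  calc |P.real s - Q.real s| ≤ |P.real s| + |Q.real s| := abs_sub _ _
    _ ≤ P.real univ + Q.real univ := by
      rw [abs_of_nonneg measureReal_nonneg, abs_of_nonneg measureReal_nonneg]
      exact add_le_add (measureReal_mono (subset_univ _)) (measureReal_mono (subset_univ _))

lemma tvDist_nonneg [IsFiniteMeasure P] [IsFiniteMeasure Q] : 0 ≤ tvDist P Q :=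
  (abs_nonneg _).trans (abs_measureReal_sub_le_tvDist P Q MeasurableSet.empty)

lemma tvDist_le_one [IsProbabilityMeasure P] [IsProbabilityMeasure Q] : tvDist P Q ≤ 1 :=
  ciSup_le fun _ => abs_sub_le_of_nonneg_of_le measureReal_nonneg measureReal_le_one
    measureReal_nonneg measureReal_le_one

/-- Layer cake: both integrals are `∫ t in (0, 1], ν {t ≤ f}`, and the integrands differ by at
most `tvDist P Q` for every `t`. -/
lemma abs_integral_sub_le_tvDist [IsFiniteMeasure P] [IsFiniteMeasure Q] {f : β → ℝ}
    (hf : Measurable f) (hf0 : 0 ≤ f) (hf1 : f ≤ 1) :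
    |∫ y, f y ∂P - ∫ y, f y ∂Q| ≤ tvDist P Q := by
  have layer_cake : ∀ (ν : Measure β) [IsFiniteMeasure ν],
      ∫ y, f y ∂ν = ∫ t in Ioc 0 1, ν.real {y | t ≤ f y} := fun ν _ =>
    (Integrable.of_bound hf.aestronglyMeasurable 1 (ae_of_all _ fun y => by
      simpa [abs_of_nonneg (hf0 y)] using hf1 y)).integral_eq_integral_Ioc_meas_le
      (ae_of_all _ hf0) (ae_of_all _ hf1)
  have integrableOn_layer : ∀ (ν : Measure β) [IsFiniteMeasure ν],
      IntegrableOn (fun t => ν.real {y | t ≤ f y}) (Ioc 0 1) := fun ν _ =>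
    have hanti : Antitone fun t : ℝ => ν.real {y | t ≤ f y} :=
      fun _ _ hst => measureReal_mono fun _ h => hst.trans h
    (hanti.locallyIntegrable.integrableOn_isCompact isCompact_Icc).mono_set Ioc_subset_Icc_self
  calc |∫ y, f y ∂P - ∫ y, f y ∂Q|
      = |∫ t in Ioc 0 1, (P.real {y | t ≤ f y} - Q.real {y | t ≤ f y})| := by
        rw [layer_cake P, layer_cake Q, integral_sub (integrableOn_layer P) (integrableOn_layer Q)]
    _ ≤ ∫ t in Ioc 0 1, |P.real {y | t ≤ f y} - Q.real {y | t ≤ f y}| :=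
        abs_integral_le_integral_abs
    _ ≤ ∫ _ in Ioc (0 : ℝ) 1, tvDist P Q :=
        integral_mono_of_nonneg (ae_of_all _ fun _ => abs_nonneg _) (integrable_const _)
          (ae_of_all _ fun _ =>
            abs_measureReal_sub_le_tvDist P Q (measurableSet_le measurable_const hf))
    _ = tvDist P Q := by simp

end tvDist

lemma MeasureTheory.Measure.measureReal_compProd_apply {α β : Type*}
    [MeasurableSpace α] [MeasurableSpace β] (ν : Measure α) [SFinite ν]
    (κ : Kernel α β) [IsFiniteKernel κ] {A : Set (α × β)} (hA : MeasurableSet A) :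
    (ν ⊗ₘ κ).real A = ∫ x, (κ x).real (Prod.mk x ⁻¹' A) ∂ν := by
  rw [measureReal_def, Measure.compProd_apply hA,
    ← integral_toReal (Kernel.measurable_kernel_prodMk_left hA).aemeasurable
      (ae_of_all _ fun _ => measure_lt_top _ _)]
  rfl

lemma abs_integral_compProd_sub_le_integral_tvDist {α β : Type*} [MeasurableSpace α]
    [MeasurableSpace β] (μ : Measure α) [IsFiniteMeasure μ]
    (κ η : Kernel α β) [IsMarkovKernel κ] [IsMarkovKernel η]
    (hmeas : Measurable fun x => tvDist (κ x) (η x))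
    {f : α × β → ℝ} (hf : Measurable f) (hf0 : 0 ≤ f) (hf1 : f ≤ 1) :
    |∫ p, f p ∂(μ ⊗ₘ κ) - ∫ p, f p ∂(μ ⊗ₘ η)| ≤ ∫ x, tvDist (κ x) (η x) ∂μ := by
  have hf_bound : ∀ p, ‖f p‖ ≤ 1 := fun p => by simpa [abs_of_nonneg (hf0 p)] using hf1 p
  have integrable_f : ∀ (ξ : Kernel α β) [IsMarkovKernel ξ], Integrable f (μ ⊗ₘ ξ) :=
    fun _ _ => .of_bound hf.aestronglyMeasurable 1 (ae_of_all _ hf_bound)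
  have integrable_slice_integral : ∀ (ξ : Kernel α β) [IsMarkovKernel ξ],
      Integrable (fun x => ∫ y, f (x, y) ∂ξ x) μ := fun ξ _ =>
    .of_bound (hf.stronglyMeasurable.integral_kernel_prod_right' (κ := ξ)).aestronglyMeasurable
      1 (ae_of_all _ fun x => by
        simpa using norm_integral_le_of_norm_le_const (μ := ξ x)
          (ae_of_all _ fun y => hf_bound (x, y)))
  have integrable_tvDist : Integrable (fun x => tvDist (κ x) (η x)) μ :=
    .of_bound hmeas.aestronglyMeasurable 1 (ae_of_all _ fun x => by
      simpa [abs_of_nonneg (tvDist_nonneg _ _)] using tvDist_le_one (κ x) (η x))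
  rw [Measure.integral_compProd (integrable_f κ), Measure.integral_compProd (integrable_f η),
    ← integral_sub (integrable_slice_integral κ) (integrable_slice_integral η)]
  refine abs_integral_le_integral_abs.trans <| integral_mono_of_nonneg
    (ae_of_all _ fun _ => abs_nonneg _) integrable_tvDist (ae_of_all _ fun x => ?_)
  exact abs_integral_sub_le_tvDist (κ x) (η x) (hf.comp measurable_prodMk_left)
    (fun y => hf0 (x, y)) (fun y => hf1 (x, y))

/-- For a probability measure `μ` on `α`, Markov kernels `κ, η` from `α`
to `β` (with `x ↦ TV(κ x, η x)` measurable) and a Markov kernel `ρ` from `α × β` to `γ`,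
`TV((μ ⊗ κ) ⊗ ρ, (μ ⊗ η) ⊗ ρ) ≤ ∫ TV(κ x, η x) dμ(x)`. -/
theorem tvDist_compProd_compProd_le_integral {α β γ : Type*}
    [MeasurableSpace α] [MeasurableSpace β] [MeasurableSpace γ]
    (μ : Measure α) [IsProbabilityMeasure μ]
    (κ η : Kernel α β) [IsMarkovKernel κ] [IsMarkovKernel η]
    (hmeas : Measurable fun x => tvDist (κ x) (η x))
    (ρ : Kernel (α × β) γ) [IsMarkovKernel ρ] :
    tvDist ((μ ⊗ₘ κ) ⊗ₘ ρ) ((μ ⊗ₘ η) ⊗ₘ ρ) ≤ ∫ x, tvDist (κ x) (η x) ∂μ := by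
  refine ciSup_le fun ⟨A, hA⟩ => ?_
  change |((μ ⊗ₘ κ) ⊗ₘ ρ).real A - ((μ ⊗ₘ η) ⊗ₘ ρ).real A| ≤ _
  rw [Measure.measureReal_compProd_apply _ ρ hA, Measure.measureReal_compProd_apply _ ρ hA]
  exact abs_integral_compProd_sub_le_integral_tvDist μ κ η hmeas
    (Kernel.measurable_kernel_prodMk_left hA).ennreal_toReal
    (fun _ => measureReal_nonneg) (fun _ => measureReal_le_one)
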